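/- arXiv:2002.00409 — 2 statements merged into one kernel-verified Lean document; each statement's English description precedes it below -/
import Mathlib

section
/- Let M be a proper metric space and (X,𝓔) a finitary coarse space. Let G = G_{X,h_M(X,𝓔)} be the permutation group of the M-compactification h_M(X,𝓔) of X. Then 𝓔 ⊆ 𝓔_G. -/
open Set Filter Topology

universe u u₁ u₂ v w

section CoarsePreamble

variable {X : Type u}

/-- An entourage on `X` is a subset of `X × X` containing the diagonal. -/
def IsEntourage (E : Set (X × X)) : Prop := ∀ x : X, (x, x) ∈ E

/-- Composition `E ∘ F` of two entourages. -/
def entComp (E F : Set (X × X)) : Set (X × X) :=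
  {p | ∃ y : X, (p.1, y) ∈ E ∧ (y, p.2) ∈ F}

/-- Inverse `E⁻¹` of an entourage. -/
def entInv (E : Set (X × X)) : Set (X × X) := {p | (p.2, p.1) ∈ E}

/-- The `E`-ball `E[x]` centered at `x`. -/
def entBall (E : Set (X × X)) (x : X) : Set X := {y | (x, y) ∈ E}

/-- A coarse structure on `X`: a family of entourages covering `X × X`, closed under
`E ∘ F⁻¹` up to enlargement, and downward closed among entourages. -/
structure IsCoarseStructure (𝓔 : Set (Set (X × X))) : Prop where
  ent : ∀ E ∈ 𝓔, IsEntourage E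
  cover : ∀ p : X × X, ∃ E ∈ 𝓔, p ∈ E
  comp_subset : ∀ E ∈ 𝓔, ∀ F ∈ 𝓔, ∃ G ∈ 𝓔, entComp E (entInv F) ⊆ G
  downward : ∀ E F : Set (X × X), IsEntourage E → E ⊆ F → F ∈ 𝓔 → E ∈ 𝓔

/-- A set `B` is bounded in the coarse space `(X, 𝓔)` if `B ⊆ E[x]` for some `E ∈ 𝓔`, `x ∈ X`. -/
def IsBoundedSet (𝓔 : Set (Set (X × X))) (B : Set X) : Prop :=
  ∃ E ∈ 𝓔, ∃ x : X, B ⊆ entBall E x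

/-- A coarse structure is finitary if the cardinalities of balls of each entourage
are uniformly finite. -/
def IsFinitaryCoarse (𝓔 : Set (Set (X × X))) : Prop :=
  ∀ E ∈ 𝓔, ∃ n : ℕ, ∀ x : X, (entBall E x).Finite ∧ (entBall E x).ncard ≤ n

/-- `d : X → X → ℝ` is a metric. -/
structure IsMetricOn (d : X → X → ℝ) : Prop where
  refl : ∀ x, d x x = 0
  eq_of : ∀ x y, d x y = 0 → x = y
  symm : ∀ x y, d x y = d y x
  triangle : ∀ x y z, d x z ≤ d x y + d y z

/-- A coarse structure is metrizable if it is the coarse structure of some metric on `X`,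
i.e. consists of all entourages of uniformly bounded `d`-diameter. -/
def IsMetrizableCoarse (𝓔 : Set (Set (X × X))) : Prop :=
  ∃ d : X → X → ℝ, IsMetricOn d ∧
    𝓔 = {E | IsEntourage E ∧ ∃ n : ℕ, ∀ p ∈ E, d p.1 p.2 ≤ (n : ℝ)}

/-- A cellular entourage: a symmetric and transitive entourage (an equivalence relation). -/
def IsCellularEnt (E : Set (X × X)) : Prop :=
  (∀ p : X × X, p ∈ E → (p.2, p.1) ∈ E) ∧
    ∀ x y z : X, (x, y) ∈ E → (y, z) ∈ E → (x, z) ∈ E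

/-- `𝓑` is a base of the coarse structure `𝓔`. -/
def IsCoarseBase (𝓔 𝓑 : Set (Set (X × X))) : Prop :=
  𝓑 ⊆ 𝓔 ∧ ∀ E ∈ 𝓔, ∃ B ∈ 𝓑, E ⊆ B

/-- A coarse structure is cellular if it has a base of cellular entourages. -/
def IsCellularCoarse (𝓔 : Set (Set (X × X))) : Prop :=
  ∃ 𝓑 : Set (Set (X × X)), IsCoarseBase 𝓔 𝓑 ∧ ∀ B ∈ 𝓑, IsCellularEnt B

/-- A subset `D` is `𝓔`-discrete (thin). -/
def IsCoarseDiscrete (𝓔 : Set (Set (X × X))) (D : Set X) : Prop :=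
  ∀ E ∈ 𝓔, ∃ B : Set X, IsBoundedSet 𝓔 B ∧ ∀ x ∈ D \ B, D ∩ entBall E x = {x}

/-- The basic entourage `E_F` determined by a set `F` of permutations of `X`. -/
def permEnt (F : Set (Equiv.Perm X)) : Set (X × X) :=
  {p | p.2 = p.1 ∨ ∃ g ∈ F, p.2 = g p.1}

/-- The coarse structure `𝓔_G` generated by a set (group) `S` of permutations of `X`:
all entourages contained in `E_F` for some finite `F ⊆ S`. -/
def permCoarse (S : Set (Equiv.Perm X)) : Set (Set (X × X)) :=
  {E | IsEntourage E ∧ ∃ F : Finset (Equiv.Perm X),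
    (F : Set (Equiv.Perm X)) ⊆ S ∧ E ⊆ permEnt (F : Set (Equiv.Perm X))}

variable {M : Type v} [MetricSpace M]

/-- A function `φ : X → M` is slowly oscillating. -/
def SlowlyOscillating (𝓔 : Set (Set (X × X))) (φ : X → M) : Prop :=
  ∀ ε : ℝ, 0 < ε → ∀ E ∈ 𝓔, ∃ B : Set X, IsBoundedSet 𝓔 B ∧
    ∀ x : X, x ∉ B → EMetric.diam (φ '' entBall E x) < ENNReal.ofReal ε

/-- Two sets are asymptotically separated if `E[A] ∩ E[B]` is bounded for every `E ∈ 𝓔`. -/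
def AsymptoticallySeparated (𝓔 : Set (Set (X × X))) (A B : Set X) : Prop :=
  ∀ E ∈ 𝓔, IsBoundedSet 𝓔 ((⋃ a ∈ A, entBall E a) ∩ ⋃ b ∈ B, entBall E b)

/-- A coarse space `(X, 𝓔)` is `M`-normal. -/
def IsCoarseNormal (𝓔 : Set (Set (X × X))) (M : Type v) [MetricSpace M] : Prop :=
  ∀ A B : Set X, A.Nonempty → B.Nonempty → Disjoint A B →
    AsymptoticallySeparated 𝓔 A B →
    ∃ φ : X → M, SlowlyOscillating 𝓔 φ ∧
      ∃ ε : ℝ, 0 < ε ∧ ∀ a ∈ A, ∀ b ∈ B, ε ≤ dist (φ a) (φ b)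

/-- `so(X,𝓔;M)`: the bounded slowly oscillating functions `X → M`. -/
def soSet (𝓔 : Set (Set (X × X))) (M : Type v) [MetricSpace M] : Set (X → M) :=
  {φ | Bornology.IsBounded (Set.range φ) ∧ SlowlyOscillating 𝓔 φ}

/-- The canonical map `δ_M : X → M^{so(X,𝓔;M)}`. -/
def deltaMap (𝓔 : Set (Set (X × X))) (M : Type v) [MetricSpace M] :
    X → (↥(soSet 𝓔 M) → M) := fun x f => f.1 x

/-- The underlying set of the `M`-compactification: the closure of `δ_M(X)`. -/
def hCompSet (𝓔 : Set (Set (X × X))) (M : Type v) [MetricSpace M] :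
    Set (↥(soSet 𝓔 M) → M) := closure (Set.range (deltaMap 𝓔 M))

/-- The `M`-compactification `h_M(X,𝓔)` of the coarse space `(X,𝓔)`. -/
abbrev HComp (𝓔 : Set (Set (X × X))) (M : Type v) [MetricSpace M] :=
  ↥(hCompSet 𝓔 M)

/-- The copy of a point `x ∈ X` inside the `M`-compactification. -/
def deltaEmb (𝓔 : Set (Set (X × X))) (M : Type v) [MetricSpace M] (x : X) :
    HComp 𝓔 M := ⟨deltaMap 𝓔 M x, subset_closure (Set.mem_range_self x)⟩

/-- The permutation group `G_{X, h_M(X,𝓔)}` of the `M`-compactification, as a set of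
permutations of `X` (`X` being identified with the set of isolated points of `h_M(X,𝓔)`
via `δ_M`): those permutations induced by homeomorphisms of `h_M(X,𝓔)` fixing all
points outside (the image of) `X`. -/
def hPermGroup (𝓔 : Set (Set (X × X))) (M : Type v) [MetricSpace M] :
    Set (Equiv.Perm X) :=
  {σ | ∃ h : HComp 𝓔 M ≃ₜ HComp 𝓔 M,
    (∀ z : HComp 𝓔 M, z ∉ Set.range (deltaEmb 𝓔 M) → h z = z) ∧
    ∀ x : X, h (deltaEmb 𝓔 M x) = deltaEmb 𝓔 M (σ x)}

end CoarsePreamble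

section TopPreamble

/-- The set of isolated points of a topological space. -/
def isolatedPoints (K : Type w) [TopologicalSpace K] : Set K :=
  {x | IsOpen ({x} : Set K)}

/-- A compactification: a compact Hausdorff space with dense set of isolated points. -/
def IsCompactification (K : Type w) [TopologicalSpace K] : Prop :=
  CompactSpace K ∧ T2Space K ∧ Dense (isolatedPoints K)

/-- The permutation group `G_{K',K}` of a compactification `K`: permutations of the
set `K'` of isolated points induced by homeomorphisms of `K` fixing `K \ K'` pointwise. -/
def homeoPerms (K : Type w) [TopologicalSpace K] :
    Set (Equiv.Perm ↥(isolatedPoints K)) :=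
  {σ | ∃ h : K ≃ₜ K, (∀ z : K, z ∉ isolatedPoints K → h z = z) ∧
    ∀ x : ↥(isolatedPoints K), h x.val = (σ x).val}

/-- The oscillation of `φ : K' → M` at a point `z ∈ K`. -/
noncomputable def oscAt {K : Type w} [TopologicalSpace K] {M : Type v} [MetricSpace M]
    (φ : ↥(isolatedPoints K) → M) (z : K) : ENNReal :=
  ⨅ (O : Set K) (_ : IsOpen O) (_ : z ∈ O),
    EMetric.diam (φ '' (Subtype.val ⁻¹' O))

/-- A compactification `K` is `M`-soft. -/
def IsMSoft (K : Type w) [TopologicalSpace K] (M : Type v) [MetricSpace M] : Prop :=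
  ∀ φ : ↥(isolatedPoints K) → M, Bornology.IsBounded (Set.range φ) →
    (∃ z : K, 0 < oscAt φ z) →
    ∃ σ ∈ homeoPerms K, ∃ ε : ℝ, 0 < ε ∧
      {x : ↥(isolatedPoints K) | ε ≤ dist (φ (σ x)) (φ x)}.Infinite

/-- A compactification `K` is soft. -/
def IsSoft (K : Type w) [TopologicalSpace K] : Prop :=
  ∀ A B : Set ↥(isolatedPoints K), Disjoint A B →
    (closure (Subtype.val '' A) ∩ closure (Subtype.val '' B)).Nonempty →
    ∃ σ ∈ homeoPerms K, {x : ↥(isolatedPoints K) | x ∈ A ∧ σ x ∈ B}.Infinite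

/-- `uc(K',K;M)`: restrictions to the set of isolated points of continuous functions `K → M`. -/
def ucSet (K : Type w) [TopologicalSpace K] (M : Type v) [MetricSpace M] :
    Set (↥(isolatedPoints K) → M) :=
  {φ | ∃ f : K → M, Continuous f ∧ ∀ x : ↥(isolatedPoints K), f x.val = φ x}

/-- `uc(X, h_M(X,𝓔); M)`: restrictions to `X` (via `δ_M`) of continuous functions
`h_M(X,𝓔) → M`. -/
def ucHComp {X : Type u} (𝓔 : Set (Set (X × X))) (M : Type v) [MetricSpace M] :
    Set (X → M) :=
  {φ | ∃ f : HComp 𝓔 M → M, Continuous f ∧ ∀ x : X, f (deltaEmb 𝓔 M x) = φ x}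

/-- The cardinal `Δ`: the smallest cardinality of a base of a cellular finitary coarse
structure on `ω` containing no infinite discrete subsets. -/
noncomputable def smallDeltaCard : Cardinal.{0} :=
  sInf {c : Cardinal.{0} | ∃ 𝓔 : Set (Set (ℕ × ℕ)), IsCoarseStructure 𝓔 ∧
    IsCellularCoarse 𝓔 ∧ IsFinitaryCoarse 𝓔 ∧
    (∀ D : Set ℕ, IsCoarseDiscrete 𝓔 D → D.Finite) ∧
    ∃ 𝓑 : Set (Set (ℕ × ℕ)), IsCoarseBase 𝓔 𝓑 ∧ Cardinal.mk ↥𝓑 = c}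

/-- The cardinal `𝔭`. -/
noncomputable def pCard : Cardinal.{0} :=
  sInf {c : Cardinal.{0} | ∃ F : Set (Set ℕ), (∀ A ∈ F, A.Infinite) ∧
    (∀ S : Finset (Set ℕ), (S : Set (Set ℕ)) ⊆ F → (⋂ A ∈ S, A).Infinite) ∧
    (∀ I : Set ℕ, I.Infinite → ∃ A ∈ F, (I \ A).Infinite) ∧
    Cardinal.mk ↥F = c}

/-- The character `χ(x;K)` of a point. -/
noncomputable def charAt (K : Type w) [TopologicalSpace K] (x : K) : Cardinal.{w} :=
  sInf {c : Cardinal.{w} | ∃ 𝓑 : Set (Set K), (∀ U ∈ 𝓑, IsOpen U ∧ x ∈ U) ∧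
    (∀ V : Set K, IsOpen V → x ∈ V → ∃ U ∈ 𝓑, U ⊆ V) ∧ Cardinal.mk ↥𝓑 = c}

/-- The character `χ(K)` of a space. -/
noncomputable def spaceChar (K : Type w) [TopologicalSpace K] : Cardinal.{w} :=
  ⨆ x : K, charAt K x

/-- A corona: a compact Hausdorff space homeomorphic to the remainder of a
compactification of the countable discrete space `ℕ`. -/
def IsCorona (K : Type w) [TopologicalSpace K] : Prop :=
  CompactSpace K ∧ T2Space K ∧
    ∃ (C : Type w) (_ : TopologicalSpace C), IsCompactification C ∧
      (isolatedPoints C).Infinite ∧ (isolatedPoints C).Countable ∧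
      Nonempty (K ≃ₜ ↥((isolatedPoints C)ᶜ))

/-- A soft corona. -/
def IsSoftCorona (K : Type w) [TopologicalSpace K] : Prop :=
  CompactSpace K ∧ T2Space K ∧
    ∃ (C : Type w) (_ : TopologicalSpace C), IsCompactification C ∧ IsSoft C ∧
      (isolatedPoints C).Infinite ∧ (isolatedPoints C).Countable ∧
      Nonempty (K ≃ₜ ↥((isolatedPoints C)ᶜ))

/-- An `M`-soft corona. -/
def IsMSoftCorona (K : Type w) [TopologicalSpace K] (M : Type v) [MetricSpace M] : Prop :=
  CompactSpace K ∧ T2Space K ∧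
    ∃ (C : Type w) (_ : TopologicalSpace C), IsCompactification C ∧ IsMSoft C M ∧
      (isolatedPoints C).Infinite ∧ (isolatedPoints C).Countable ∧
      Nonempty (K ≃ₜ ↥((isolatedPoints C)ᶜ))

end TopPreamble

/-!
A permutation `σ` of `X` that moves every point within a fixed entourage acts on
`so(X,𝓔;M)` by precomposition, and dually on `M^{so(X,𝓔;M)}` by a homeomorphism mapping
`δ_M x` to `δ_M (σ x)`; it therefore restricts to a homeomorphism of `h_M(X,𝓔)`. This
homeomorphism fixes the remainder: for slowly oscillating `f`, `f ∘ σ` and `f` are `ε`-close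
outside a bounded set, which is finite because the space is finitary, and every remainder
point is a limit of `δ_M`-images of points outside any finite set.

For `E ∈ 𝓔`, the off-diagonal part of `E` is a graph of uniformly bounded degree, so a greedy
colouring of its line graph splits it into finitely many matchings. Each matching is the
graph of an involution of the above kind, and these finitely many involutions witness
`E ∈ 𝓔_G`.
-/

theorem Nat.exists_le_notMem_of_encard_le {s : Set ℕ} {m : ℕ} (h : s.encard ≤ m) :
    ∃ i ≤ m, i ∉ s := by
  by_contra! hs
  have : ((Finset.range (m + 1) : Set ℕ)).encard ≤ m :=
    (encard_le_encard fun i hi => hs i (Nat.lt_succ_iff.mp (Finset.mem_range.mp hi))).trans h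
  rw [encard_coe_eq_coe_finsetCard, Finset.card_range] at this
  norm_cast at this
  omega

theorem Equiv.Perm.exists_of_symmetric_of_rightUnique {α : Type*} {R : α → α → Prop}
    (hsymm : ∀ x y, R x y → R y x) (huniq : Relator.RightUnique R) :
    ∃ σ : Equiv.Perm α, (∀ x y, R x y → σ x = y) ∧ ∀ x, σ x = x ∨ R x (σ x) := by
  classical
  let f : α → α := fun x => if h : ∃ y, R x y then h.choose else x
  have hf : ∀ x y, R x y → f x = y := fun x y hxy => by
    have hex : ∃ y, R x y := ⟨y, hxy⟩
    simp only [f, dif_pos hex]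
    exact huniq hex.choose_spec hxy
  have hf_or : ∀ x, f x = x ∨ R x (f x) := fun x => by
    by_cases hex : ∃ y, R x y
    · exact Or.inr (hf x _ hex.choose_spec ▸ hex.choose_spec)
    · exact Or.inl (dif_neg hex)
  have hinv : Function.Involutive f := fun x => by
    rcases hf_or x with hx | hx
    · rw [hx, hx]
    · exact hf _ _ (hsymm _ _ hx)
  exact ⟨hinv.toPerm f, hf, hf_or⟩

namespace SimpleGraph

variable {V : Type*} (G : SimpleGraph V)

noncomputable def greedyColor : V → ℕ :=
  (IsWellFounded.wf (r := @WellOrderingRel V)).fix fun v c =>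
    sInf {i | ∀ w (hw : WellOrderingRel w v), G.Adj w v → c w hw ≠ i}

theorem greedyColor_eq (v : V) :
    G.greedyColor v = sInf {i | ∀ w, WellOrderingRel w v → G.Adj w v → G.greedyColor w ≠ i} := by
  rw [greedyColor, WellFounded.fix_eq]

variable {G}

theorem greedyColor_spec {m : ℕ} (h : ∀ v, (G.neighborSet v).encard ≤ m) (v : V) :
    G.greedyColor v ≤ m ∧
      ∀ w, WellOrderingRel w v → G.Adj w v → G.greedyColor w ≠ G.greedyColor v := by
  obtain ⟨i, him, hi⟩ := Nat.exists_le_notMem_of_encard_le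
    ((encard_image_le G.greedyColor _).trans (h v))
  have hfree : i ∈ {i | ∀ w, WellOrderingRel w v → G.Adj w v → G.greedyColor w ≠ i} :=
    fun w _ hwv hc => hi ⟨w, hwv.symm, hc⟩
  rw [greedyColor_eq]
  exact ⟨(Nat.sInf_le hfree).trans him, Nat.sInf_mem ⟨i, hfree⟩⟩

theorem colorable_of_forall_encard_neighborSet_le {m : ℕ}
    (h : ∀ v, (G.neighborSet v).encard ≤ m) : G.Colorable (m + 1) := by
  refine ⟨Coloring.mk (fun v => ⟨G.greedyColor v, Nat.lt_succ_of_le (greedyColor_spec h v).1⟩)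
    fun {v w} hvw hc => ?_⟩
  have hc : G.greedyColor v = G.greedyColor w := congrArg Fin.val hc
  rcases trichotomous_of WellOrderingRel v w with hlt | rfl | hgt
  · exact (greedyColor_spec h w).2 v hlt hvw hc
  · exact G.irrefl hvw
  · exact (greedyColor_spec h v).2 w hgt hvw.symm hc.symm

theorem encard_neighborSet_lineGraph_le {m : ℕ} (h : ∀ v, (G.neighborSet v).encard ≤ m)
    (e : G.edgeSet) : (G.lineGraph.neighborSet e).encard ≤ 2 * m := by
  classical
  obtain ⟨⟨v, w⟩, he⟩ := e
  have hsub : Subtype.val '' G.lineGraph.neighborSet ⟨s(v, w), he⟩ ⊆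
      G.incidenceSet v ∪ G.incidenceSet w := by
    rintro _ ⟨e', he', rfl⟩
    obtain ⟨-, u, hu, hu'⟩ := lineGraph_adj_iff_exists.mp he'
    rcases Sym2.mem_iff.mp hu with rfl | rfl
    · exact Or.inl ⟨e'.2, hu'⟩
    · exact Or.inr ⟨e'.2, hu'⟩
  have hinc : ∀ u, (G.incidenceSet u).encard ≤ m := fun u =>
    (encard_congr (G.incidenceSetEquivNeighborSet u)).trans_le (h u)
  calc (G.lineGraph.neighborSet ⟨s(v, w), he⟩).encard
      = (Subtype.val '' G.lineGraph.neighborSet ⟨s(v, w), he⟩).encard :=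
        (Subtype.val_injective.encard_image _).symm
    _ ≤ (G.incidenceSet v ∪ G.incidenceSet w).encard := encard_le_encard hsub
    _ ≤ m + m := (encard_union_le _ _).trans (add_le_add (hinc v) (hinc w))
    _ = 2 * m := by ring

theorem exists_perms_of_colorable_lineGraph {k : ℕ} (hk : G.lineGraph.Colorable k) :
    ∃ σ : Fin k → Equiv.Perm V,
      (∀ i v, σ i v = v ∨ G.Adj v (σ i v)) ∧ ∀ v w, G.Adj v w → ∃ i, σ i v = w := by
  obtain ⟨C⟩ := hk
  let R : Fin k → V → V → Prop := fun i v w => ∃ h : G.Adj v w, C ⟨s(v, w), h⟩ = i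
  have hsymm : ∀ i v w, R i v w → R i w v := fun i v w ⟨h, hc⟩ =>
    ⟨h.symm, by simpa [Sym2.eq_swap] using hc⟩
  have huniq : ∀ i, Relator.RightUnique (R i) := by
    rintro i v w w' ⟨h, hc⟩ ⟨h', hc'⟩
    by_contra hne
    refine C.valid (lineGraph_adj_iff_exists.mpr
      ⟨?_, v, Sym2.mem_mk_left v w, Sym2.mem_mk_left v w'⟩) (hc.trans hc'.symm)
    intro heq
    rcases Sym2.eq_iff.mp (congrArg Subtype.val heq) with ⟨-, hww'⟩ | ⟨-, hwv⟩
    · exact hne hww'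
    · exact G.ne_of_adj h hwv.symm
  choose σ hσ hσ_or using fun i =>
    Equiv.Perm.exists_of_symmetric_of_rightUnique (hsymm i) (huniq i)
  exact ⟨σ, fun i v => (hσ_or i v).imp_right fun ⟨h, _⟩ => h,
    fun v w hvw => ⟨_, hσ _ v w ⟨hvw, rfl⟩⟩⟩

theorem exists_perms_of_forall_encard_neighborSet_le {m : ℕ}
    (h : ∀ v, (G.neighborSet v).encard ≤ m) :
    ∃ σ : Fin (2 * m + 1) → Equiv.Perm V,
      (∀ i v, σ i v = v ∨ G.Adj v (σ i v)) ∧ ∀ v w, G.Adj v w → ∃ i, σ i v = w :=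
  exists_perms_of_colorable_lineGraph
    (colorable_of_forall_encard_neighborSet_le (encard_neighborSet_lineGraph_le h))

theorem symm_apply_eq_or_adj {σ : Equiv.Perm V} (hσ : ∀ v, σ v = v ∨ G.Adj v (σ v)) (v : V) :
    σ.symm v = v ∨ G.Adj v (σ.symm v) := by
  rcases hσ (σ.symm v) with h | h <;> rw [Equiv.apply_symm_apply] at h
  · exact Or.inl h.symm
  · exact Or.inr h.symm

end SimpleGraph

section Coarse

variable {X : Type u} {𝓔 : Set (Set (X × X))}

theorem IsCoarseStructure.union_entInv_mem (hcs : IsCoarseStructure 𝓔) {E : Set (X × X)}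
    (hE : E ∈ 𝓔) : E ∪ entInv E ∈ 𝓔 := by
  obtain ⟨G, hG, hEG⟩ := hcs.comp_subset E hE E hE
  refine hcs.downward _ G (fun x => Or.inl (hcs.ent E hE x)) ?_ hG
  rintro ⟨x, y⟩ (h | h)
  · exact hEG ⟨y, h, hcs.ent E hE y⟩
  · exact hEG ⟨x, hcs.ent E hE x, h⟩

theorem IsFinitaryCoarse.finite_of_isBoundedSet (hfin : IsFinitaryCoarse 𝓔) {B : Set X}
    (hB : IsBoundedSet 𝓔 B) : B.Finite := by
  obtain ⟨E, hE, x, hBE⟩ := hB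
  obtain ⟨n, hn⟩ := hfin E hE
  exact (hn x).1.subset hBE

variable {M : Type v} [MetricSpace M]

theorem SlowlyOscillating.exists_dist_lt {φ : X → M} (hφ : SlowlyOscillating 𝓔 φ)
    {E : Set (X × X)} (hE : E ∈ 𝓔) {ε : ℝ} (hε : 0 < ε) :
    ∃ B, IsBoundedSet 𝓔 B ∧ ∀ x ∉ B, ∀ y ∈ entBall E x, ∀ y' ∈ entBall E x,
      dist (φ y) (φ y') < ε := by
  obtain ⟨B, hB, hdiam⟩ := hφ ε hε E hE
  refine ⟨B, hB, fun x hx y hy y' hy' => edist_lt_ofReal.mp ?_⟩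
  exact (Metric.edist_le_ediam_of_mem (mem_image_of_mem φ hy) (mem_image_of_mem φ hy')).trans_lt
    (hdiam x hx)

theorem comp_perm_mem_soSet (hcs : IsCoarseStructure 𝓔) {σ : Equiv.Perm X} {E : Set (X × X)}
    (hE : E ∈ 𝓔) (hσ : ∀ x, (σ x, x) ∈ E) {f : X → M} (hf : f ∈ soSet 𝓔 M) :
    f ∘ σ ∈ soSet 𝓔 M := by
  refine ⟨hf.1.subset (range_comp_subset_range σ f), fun ε hε E' hE' => ?_⟩
  obtain ⟨G, hG, hE'EG⟩ := hcs.comp_subset E' hE' E hE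
  obtain ⟨B, hB, hdiam⟩ := hf.2 ε hε G hG
  refine ⟨B, hB, fun x hx => (Metric.ediam_mono ?_).trans_lt (hdiam x hx)⟩
  rintro _ ⟨y, hy, rfl⟩
  exact ⟨σ y, hE'EG ⟨y, hy, hσ y⟩, rfl⟩

def soPrecomp (hcs : IsCoarseStructure 𝓔) (σ : Equiv.Perm X) {E : Set (X × X)} (hE : E ∈ 𝓔)
    (hσ : ∀ x, (σ x, x) ∈ E) (hσ' : ∀ x, (σ.symm x, x) ∈ E) : soSet 𝓔 M ≃ soSet 𝓔 M where
  toFun f := ⟨f.1 ∘ σ, comp_perm_mem_soSet hcs hE hσ f.2⟩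
  invFun f := ⟨f.1 ∘ σ.symm, comp_perm_mem_soSet hcs hE hσ' f.2⟩
  left_inv f := Subtype.ext (by simp [Function.comp_assoc])
  right_inv f := Subtype.ext (by simp [Function.comp_assoc])

theorem mem_closure_image_compl_of_finite {α β : Type*} [TopologicalSpace β] [T1Space β]
    {g : α → β} {z : β} (hz : z ∈ closure (range g)) (hz' : z ∉ range g) {B : Set α}
    (hB : B.Finite) : z ∈ closure (g '' Bᶜ) := by
  rw [← image_union_image_compl_eq_range (s := B), closure_union,
    (hB.image g).isClosed.closure_eq] at hz
  exact hz.resolve_left fun h => hz' (image_subset_range g B h)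

section Precomp

variable (hcs : IsCoarseStructure 𝓔) (σ : Equiv.Perm X) {E : Set (X × X)} (hE : E ∈ 𝓔)
  (hσ : ∀ x, (σ x, x) ∈ E) (hσ' : ∀ x, (σ.symm x, x) ∈ E)

theorem preimage_hCompSet_soPrecomp :
    (Homeomorph.piCongrLeft (Y := fun _ => M) (soPrecomp (M := M) hcs σ hE hσ hσ')).symm ⁻¹'
      hCompSet 𝓔 M = hCompSet 𝓔 M := by
  set T := (Homeomorph.piCongrLeft (Y := fun _ => M) (soPrecomp (M := M) hcs σ hE hσ hσ')).symm
  have hTδ : T ∘ deltaMap 𝓔 M = deltaMap 𝓔 M ∘ σ := rfl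
  have hrange : T ⁻¹' range (deltaMap 𝓔 M) = range (deltaMap 𝓔 M) := by
    calc T ⁻¹' range (deltaMap 𝓔 M) = T ⁻¹' (T '' range (deltaMap 𝓔 M)) := by
          rw [← range_comp, hTδ, EquivLike.range_comp]
      _ = range (deltaMap 𝓔 M) := T.preimage_image _
  rw [hCompSet, T.preimage_closure, hrange]

def hCompHomeomorph : HComp 𝓔 M ≃ₜ HComp 𝓔 M :=
  Homeomorph.sets _ (preimage_hCompSet_soPrecomp hcs σ hE hσ hσ').symm

theorem hCompHomeomorph_deltaEmb (x : X) :
    hCompHomeomorph hcs σ hE hσ hσ' (deltaEmb 𝓔 M x) = deltaEmb 𝓔 M (σ x) :=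
  rfl

theorem hCompHomeomorph_apply_of_notMem_range (hfin : IsFinitaryCoarse 𝓔) {z : HComp 𝓔 M}
    (hz : z ∉ range (deltaEmb 𝓔 M)) : hCompHomeomorph hcs σ hE hσ hσ' z = z := by
  have hz' : z.1 ∉ range (deltaMap 𝓔 M) := fun ⟨x, hx⟩ => hz ⟨x, Subtype.ext hx⟩
  refine Subtype.ext (funext fun f => eq_of_forall_dist_le fun ε hε => ?_)
  obtain ⟨B, hB, hBε⟩ := f.2.2.exists_dist_lt hE hε
  have hzB := mem_closure_image_compl_of_finite z.2 hz' (hfin.finite_of_isBoundedSet hB)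
  let e := soPrecomp (M := M) hcs σ hE hσ hσ'
  have hclosed : IsClosed {w : soSet 𝓔 M → M | dist (w (e f)) (w f) ≤ ε} :=
    isClosed_le ((continuous_apply _).dist (continuous_apply f)) continuous_const
  refine closure_minimal ?_ hclosed hzB
  rintro _ ⟨x, hx, rfl⟩
  have hσx : (x, σ x) ∈ E := by simpa using hσ' (σ x)
  exact (hBε x hx (σ x) hσx x (hcs.ent E hE x)).le

end Precomp

theorem mem_hPermGroup_of_forall_mem (hcs : IsCoarseStructure 𝓔) (hfin : IsFinitaryCoarse 𝓔)
    {σ : Equiv.Perm X} {E : Set (X × X)} (hE : E ∈ 𝓔) (hσ : ∀ x, (σ x, x) ∈ E)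
    (hσ' : ∀ x, (σ.symm x, x) ∈ E) : σ ∈ hPermGroup 𝓔 M :=
  ⟨hCompHomeomorph hcs σ hE hσ hσ',
    fun _ hz => hCompHomeomorph_apply_of_notMem_range hcs σ hE hσ hσ' hfin hz,
    hCompHomeomorph_deltaEmb hcs σ hE hσ hσ'⟩

end Coarse

theorem statement1_general {X : Type u} (M : Type v) [MetricSpace M]
    (𝓔 : Set (Set (X × X))) (hcs : IsCoarseStructure 𝓔) (hfin : IsFinitaryCoarse 𝓔) :
    𝓔 ⊆ permCoarse (hPermGroup 𝓔 M) := by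
  classical
  intro E hE
  set S := E ∪ entInv E
  have hS : S ∈ 𝓔 := hcs.union_entInv_mem hE
  obtain ⟨n, hn⟩ := hfin S hS
  let G := SimpleGraph.fromRel fun x y => (x, y) ∈ E
  have hGS : ∀ {x y}, G.Adj x y → (y, x) ∈ S := fun h => h.2.elim Or.inr Or.inl
  have hdeg : ∀ x, (G.neighborSet x).encard ≤ n := fun x => by
    refine (encard_le_encard (t := entBall S x) fun y hy => hGS (G.adj_symm hy)).trans ?_
    rw [← (hn x).1.cast_ncard_eq]
    exact_mod_cast (hn x).2
  obtain ⟨σ, hσG, hσE⟩ := G.exists_perms_of_forall_encard_neighborSet_le hdeg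
  have hσS : ∀ τ : Equiv.Perm X, (∀ x, τ x = x ∨ G.Adj x (τ x)) → ∀ x, (τ x, x) ∈ S :=
    fun τ hτ x => (hτ x).elim (fun h => by rw [h]; exact Or.inl (hcs.ent E hE x)) hGS
  refine ⟨hcs.ent E hE, Finset.univ.image σ, ?_, ?_⟩
  · intro τ hτ
    obtain ⟨i, -, rfl⟩ := Finset.mem_image.mp hτ
    exact mem_hPermGroup_of_forall_mem hcs hfin hS (hσS _ (hσG i))
      (hσS _ (G.symm_apply_eq_or_adj (hσG i)))
  · rintro ⟨x, y⟩ hxy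
    by_cases hyx : y = x
    · exact Or.inl hyx
    · obtain ⟨i, rfl⟩ := hσE x y ⟨Ne.symm hyx, Or.inl hxy⟩
      exact Or.inr ⟨σ i, by simp, rfl⟩

/-- If `(X,𝓔)` is a finitary coarse space and `G` is the permutation group
of its `M`-compactification, then `𝓔 ⊆ 𝓔_G`. -/
theorem statement1 {X : Type u} (M : Type v) [MetricSpace M] [ProperSpace M] [Nontrivial M]
    (𝓔 : Set (Set (X × X))) (hcs : IsCoarseStructure 𝓔) (hfin : IsFinitaryCoarse 𝓔) :
    𝓔 ⊆ permCoarse (hPermGroup 𝓔 M) :=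
  statement1_general M 𝓔 hcs hfin
end

section
/- Let M be a proper metric space, K a compactification, X the set of isolated points of K, and (X,𝓔_{X,K}) the permutation coarse space of K. Then K is M-equivalent to the M-compactification h_M(X,𝓔_{X,K}) of the coarse space (X,𝓔_{X,K}) if and only if K is M-soft. -/
open Set Filter Topology

universe u u₁ u₂ v w

/-!
Call `φ : K' → M` asymptotically invariant if `dist (φ (σ x)) (φ x) → 0` along the cofinite
filter for every `σ` in the permutation group `G` of `K`. Since `G` contains the transpositions
of isolated points, the bounded sets of `𝓔_G` are exactly the finite sets, so `so(K', 𝓔_G; M)`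
consists of the bounded asymptotically invariant functions. Every function in `uc(K', K; M)` is
asymptotically invariant (for `g ∈ Homeo(K, K')`, the closed set where `f ∘ g` and `f` are
`ε`-apart avoids `K \ K'`, so it is a compact set of isolated points), and so is every
function in `uc(K', h_M; M)` (its coordinates force `δ (σ x)` and `δ x` to be uniformly
close in the compact space `h_M`). Hence `uc(K', K; M) ⊆ so ⊆ uc(K', h_M; M)` when `K' ≠ ∅`,
and by completeness of `M` a function extends continuously to `K` iff its oscillation vanishes
everywhere. `M`-softness says precisely that bounded asymptotically invariant functions have
zero oscillation, i.e. that `so ⊆ uc(K', K; M)`.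
-/

open Uniformity

section PermCoarse

variable {X : Type*} {M : Type*} [MetricSpace M] {S : Set (Equiv.Perm X)}

def IsAsymptoticallyInvariant (S : Set (Equiv.Perm X)) (φ : X → M) : Prop :=
  ∀ σ ∈ S, Tendsto (fun x => dist (φ (σ x)) (φ x)) cofinite (𝓝 0)

theorem isAsymptoticallyInvariant_iff {φ : X → M} :
    IsAsymptoticallyInvariant S φ ↔
      ∀ σ ∈ S, ∀ ε > 0, {x | ε ≤ dist (φ (σ x)) (φ x)}.Finite := by
  simp only [IsAsymptoticallyInvariant, Metric.tendsto_nhds, eventually_cofinite,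
    Real.dist_0_eq_abs, abs_dist, not_lt]

theorem permEnt_mem_permCoarse {F : Finset (Equiv.Perm X)} (hF : (F : Set (Equiv.Perm X)) ⊆ S) :
    permEnt (F : Set (Equiv.Perm X)) ∈ permCoarse S :=
  ⟨fun _ => Or.inl rfl, F, hF, subset_rfl⟩

theorem IsBoundedSet.finite_of_permCoarse {B : Set X} (hB : IsBoundedSet (permCoarse S) B) :
    B.Finite := by
  obtain ⟨E, ⟨-, F, -, hEF⟩, x, hBE⟩ := hB
  refine ((F.finite_toSet.image (fun g : Equiv.Perm X => g x)).insert x).subset fun y hy => ?_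
  obtain rfl | ⟨g, hg, rfl⟩ : y = x ∨ ∃ g ∈ F, y = g x := hEF (hBE hy)
  exacts [mem_insert _ _, mem_insert_of_mem _ ⟨g, hg, rfl⟩]

theorem isBoundedSet_permCoarse_of_finite [DecidableEq X] [Nonempty X]
    (hS : ∀ a b : X, Equiv.swap a b ∈ S) {B : Set X} (hB : B.Finite) :
    IsBoundedSet (permCoarse S) B := by
  classical
  let x₀ := Classical.arbitrary X
  refine ⟨_, permEnt_mem_permCoarse (F := hB.toFinset.image (Equiv.swap x₀)) ?_, x₀, ?_⟩
  · simp only [Finset.coe_image, image_subset_iff]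
    exact fun b _ => hS x₀ b
  · exact fun b hb => Or.inr ⟨Equiv.swap x₀ b, by simpa using ⟨b, hb, rfl⟩, by simp⟩

theorem SlowlyOscillating.isAsymptoticallyInvariant {φ : X → M}
    (h : SlowlyOscillating (permCoarse S) φ) : IsAsymptoticallyInvariant S φ := by
  refine isAsymptoticallyInvariant_iff.2 fun σ hσ ε hε => ?_
  obtain ⟨B, hB, hsmall⟩ := h ε hε _ (permEnt_mem_permCoarse (F := {σ}) (by simpa using hσ))
  refine hB.finite_of_permCoarse.subset fun x hx => ?_
  by_contra hxB
  have hσx : (x, σ x) ∈ permEnt (({σ} : Finset (Equiv.Perm X)) : Set (Equiv.Perm X)) :=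
    Or.inr ⟨σ, by simp, rfl⟩
  have hlt := (Metric.edist_le_ediam_of_mem (mem_image_of_mem φ hσx)
    (mem_image_of_mem φ (Or.inl rfl))).trans_lt (hsmall x hxB)
  rw [edist_dist, ENNReal.ofReal_lt_ofReal_iff hε] at hlt
  exact hlt.not_ge hx

theorem IsAsymptoticallyInvariant.slowlyOscillating [DecidableEq X] [Nonempty X]
    (hS : ∀ a b : X, Equiv.swap a b ∈ S) {φ : X → M} (h : IsAsymptoticallyInvariant S φ) :
    SlowlyOscillating (permCoarse S) φ := by
  rintro ε hε E ⟨-, F, hFS, hEF⟩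
  have hnear : ∀ᶠ x in cofinite, ∀ g ∈ F, dist (φ (g x)) (φ x) < ε / 3 :=
    (eventually_all_finset F).2 fun g hg =>
      (h g (hFS hg)).eventually (gt_mem_nhds (by positivity))
  refine ⟨_, isBoundedSet_permCoarse_of_finite hS hnear, fun x hx => ?_⟩
  have hclose : ∀ y ∈ entBall E x, dist (φ y) (φ x) < ε / 3 := by
    intro y hy
    obtain rfl | ⟨g, hg, rfl⟩ : y = x ∨ ∃ g ∈ F, y = g x := hEF hy
    exacts [by simpa using hε, not_not.1 hx g hg]
  refine (Metric.ediam_image_le_iff.2 fun y hy y' hy' => ?_).trans_lt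
    ((ENNReal.ofReal_lt_ofReal_iff hε).2 (by linarith : 2 * ε / 3 < ε))
  rw [edist_dist]
  exact ENNReal.ofReal_le_ofReal (by
    linarith [dist_triangle_right (φ y) (φ y') (φ x), hclose y hy, hclose y' hy'])

end PermCoarse

section Compactification

variable {K : Type*} [TopologicalSpace K] {M : Type*} [MetricSpace M]

instance discreteTopology_isolatedPoints : DiscreteTopology (isolatedPoints K) :=
  discreteTopology_iff_isOpen_singleton.2 fun x => by
    rw [← Subtype.val_injective.preimage_image {x}, image_singleton]
    exact x.2.preimage continuous_subtype_val

theorem continuous_swap_of_isOpen_singleton [T1Space K] [DecidableEq K] {a b : K}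
    (ha : IsOpen {a}) (hb : IsOpen {b}) : Continuous (Equiv.swap a b) := by
  refine continuous_iff_continuousAt.2 fun x => ?_
  by_cases hx : x = a ∨ x = b
  · have hxo : IsOpen {x} := by rcases hx with rfl | rfl <;> assumption
    rw [ContinuousAt, (isOpen_singleton_iff_nhds_eq_pure x).1 hxo, tendsto_pure_left]
    exact fun s hs => mem_of_mem_nhds hs
  · have hfar : ({a, b} : Set K)ᶜ ∈ 𝓝 x :=
      (toFinite {a, b}).isClosed.isOpen_compl.mem_nhds (by simpa using hx)
    refine continuousAt_id.congr (eventuallyEq_of_mem hfar fun y hy => ?_)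
    simp only [mem_compl_iff, mem_insert_iff, mem_singleton_iff, not_or] at hy
    exact (Equiv.swap_apply_of_ne_of_ne hy.1 hy.2).symm

theorem swap_mem_homeoPerms [T1Space K] [DecidableEq (isolatedPoints K)]
    (a b : isolatedPoints K) : Equiv.swap a b ∈ homeoPerms K := by
  classical
  have hcont := continuous_swap_of_isOpen_singleton a.2 b.2
  refine ⟨⟨Equiv.swap a.1 b.1, hcont, by simpa using hcont⟩, fun z hz => ?_, fun x => ?_⟩
  · exact Equiv.swap_apply_of_ne_of_ne (by rintro rfl; exact hz a.2) (by rintro rfl; exact hz b.2)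
  · exact Subtype.val_injective.swap_apply a b x

theorem isBounded_range_of_mem_ucSet [CompactSpace K] {φ : isolatedPoints K → M}
    (hφ : φ ∈ ucSet K M) : Bornology.IsBounded (range φ) := by
  obtain ⟨f, hf, hfφ⟩ := hφ
  exact (isCompact_range hf).isBounded.subset (range_subset_iff.2 fun x => ⟨x, hfφ x⟩)

theorem isAsymptoticallyInvariant_of_mem_ucSet [CompactSpace K] {φ : isolatedPoints K → M}
    (hφ : φ ∈ ucSet K M) : IsAsymptoticallyInvariant (homeoPerms K) φ := by
  refine isAsymptoticallyInvariant_iff.2 fun σ ⟨h, hfix, hσ⟩ ε hε => ?_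
  obtain ⟨f, hf, hfφ⟩ := hφ
  let C := {w : K | ε ≤ dist (f (h w)) (f w)}
  have hC : IsClosed C := isClosed_le continuous_const ((hf.comp h.continuous).dist hf)
  have hCK : C ⊆ isolatedPoints K := fun w hw => by
    by_contra hw'
    exact hε.not_ge (by simpa [C, hfix w hw'] using hw)
  refine (Subtype.isCompact_iff.2 ?_).finite_of_discrete
  convert hC.isCompact using 1
  ext w
  refine ⟨?_, fun hw => ⟨⟨w, hCK hw⟩, ?_, rfl⟩⟩
  · rintro ⟨x, hx, rfl⟩
    simpa [C, hσ, hfφ] using hx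
  · simpa [C, ← hσ, ← hfφ] using hw

theorem oscAt_eq_zero_iff_cauchy (hK : Dense (isolatedPoints K)) (φ : isolatedPoints K → M)
    (z : K) : oscAt φ z = 0 ↔ Cauchy (map φ (comap Subtype.val (𝓝 z))) := by
  have := hK.comap_val_nhds_neBot z
  have hbasis := ((nhds_basis_opens z).comap Subtype.val).map φ
  rw [EMetric.cauchy_iff, and_iff_right (NeBot.ne inferInstance)]
  constructor
  · intro h ε hε
    have hosc : oscAt φ z < ε := h ▸ hε
    simp only [oscAt, iInf_lt_iff, exists_prop] at hosc
    obtain ⟨O, hO, hzO, hlt⟩ := hosc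
    exact ⟨_, hbasis.mem_of_mem ⟨hzO, hO⟩, fun x hx y hy =>
      (Metric.edist_le_ediam_of_mem hx hy).trans_lt hlt⟩
  · intro h
    refine le_antisymm (le_of_forall_gt_imp_ge_of_dense fun ε hε => ?_) bot_le
    obtain ⟨t, ht, hsmall⟩ := h ε hε
    obtain ⟨O, ⟨hzO, hO⟩, hOt⟩ := hbasis.mem_iff.1 ht
    calc oscAt φ z ≤ Metric.ediam (φ '' (Subtype.val ⁻¹' O)) :=
          iInf₂_le_of_le O hO (iInf_le _ hzO)
      _ ≤ ε := Metric.ediam_le fun x hx y hy => (hsmall x (hOt hx) y (hOt hy)).le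

theorem mem_ucSet_iff_forall_oscAt_eq_zero [CompleteSpace M] (hK : Dense (isolatedPoints K))
    {φ : isolatedPoints K → M} : φ ∈ ucSet K M ↔ ∀ z, oscAt φ z = 0 := by
  simp only [oscAt_eq_zero_iff_cauchy hK]
  constructor
  · rintro ⟨f, hf, hfφ⟩ z
    have := hK.comap_val_nhds_neBot z
    have hφ : φ = f ∘ Subtype.val := funext fun x => (hfφ x).symm
    exact hφ ▸ ((hf.tendsto z).comp tendsto_comap).cauchy_map
  · intro h
    exact ⟨hK.extend φ, hK.isDenseInducing_val.continuous_extend_of_cauchy h,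
      hK.extend_eq continuous_of_discreteTopology⟩

end Compactification

section HComp

variable {X : Type*} {M : Type*} [MetricSpace M]

theorem compactSpace_hComp [ProperSpace M] (𝓔 : Set (Set (X × X))) :
    CompactSpace (HComp 𝓔 M) := by
  rw [← isCompact_iff_compactSpace]
  have hbox : IsCompact (univ.pi fun ψ : soSet 𝓔 M => closure (range ψ.1)) :=
    isCompact_univ_pi fun ψ => ψ.2.1.isCompact_closure
  refine hbox.of_isClosed_subset isClosed_closure
    (closure_minimal ?_ (isClosed_set_pi fun _ _ => isClosed_closure))
  rintro _ ⟨x, rfl⟩ ψ -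
  exact subset_closure ⟨x, rfl⟩

theorem soSet_subset_ucHComp (𝓔 : Set (Set (X × X))) : soSet 𝓔 M ⊆ ucHComp 𝓔 M :=
  fun φ hφ => ⟨fun z => z.1 ⟨φ, hφ⟩, (continuous_apply _).comp continuous_subtype_val,
    fun _ => rfl⟩

theorem mem_ucHComp_of_isEmpty [IsEmpty X] (𝓔 : Set (Set (X × X))) (φ : X → M) :
    φ ∈ ucHComp 𝓔 M := by
  have : IsEmpty (HComp 𝓔 M) := by
    simp [HComp, hCompSet, range_eq_empty]
  exact ⟨isEmptyElim, continuous_of_discreteTopology, isEmptyElim⟩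

theorem isBounded_range_of_mem_ucHComp [ProperSpace M] {𝓔 : Set (Set (X × X))} {φ : X → M}
    (hφ : φ ∈ ucHComp 𝓔 M) : Bornology.IsBounded (range φ) := by
  have := compactSpace_hComp (M := M) 𝓔
  obtain ⟨f, hf, hfφ⟩ := hφ
  exact (isCompact_range hf).isBounded.subset (range_subset_iff.2 fun x => ⟨_, hfφ x⟩)

theorem isAsymptoticallyInvariant_of_mem_ucHComp [ProperSpace M] {S : Set (Equiv.Perm X)}
    {φ : X → M} (hφ : φ ∈ ucHComp (permCoarse S) M) : IsAsymptoticallyInvariant S φ := by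
  have := compactSpace_hComp (M := M) (permCoarse S)
  obtain ⟨f, hf, hfφ⟩ := hφ
  intro σ hσ
  let δ := deltaEmb (permCoarse S) M
  have hδ : Tendsto (fun x => (δ (σ x), δ x)) cofinite (𝓤 (HComp (permCoarse S) M)) := by
    rw [uniformity_subtype, tendsto_comap_iff, Pi.uniformity, tendsto_iInf]
    intro ψ
    rw [tendsto_comap_iff, tendsto_uniformity_iff_dist_tendsto_zero]
    exact ψ.2.2.isAsymptoticallyInvariant σ hσ
  have := Tendsto.comp (CompactSpace.uniformContinuous_of_continuous hf) hδ
  simpa [δ, hfφ, tendsto_uniformity_iff_dist_tendsto_zero] using this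

end HComp

theorem statement5_general (K : Type u) [TopologicalSpace K] (hK : IsCompactification K)
    (M : Type v) [MetricSpace M] [ProperSpace M] :
    ucSet K M = ucHComp (permCoarse (homeoPerms K)) M ↔ IsMSoft K M := by
  classical
  obtain ⟨_, _, hdense⟩ := hK
  have hswap := swap_mem_homeoPerms (K := K)
  constructor
  · intro hEq φ hφ ⟨z, hz⟩
    by_contra hsoft
    push Not at hsoft
    have : Nonempty (isolatedPoints K) := (hdense.nonempty (h := ⟨z⟩)).to_subtype
    have hinv : IsAsymptoticallyInvariant (homeoPerms K) φ :=
      isAsymptoticallyInvariant_iff.2 hsoft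
    have hφK : φ ∈ ucSet K M :=
      hEq ▸ soSet_subset_ucHComp _ ⟨hφ, hinv.slowlyOscillating hswap⟩
    exact hz.ne' ((mem_ucSet_iff_forall_oscAt_eq_zero hdense).1 hφK z)
  · intro hsoft
    ext φ
    constructor
    · intro hφ
      rcases isEmpty_or_nonempty (isolatedPoints K) with _ | _
      · exact mem_ucHComp_of_isEmpty _ φ
      exact soSet_subset_ucHComp _ ⟨isBounded_range_of_mem_ucSet hφ,
        (isAsymptoticallyInvariant_of_mem_ucSet hφ).slowlyOscillating hswap⟩
    · intro hφ
      refine (mem_ucSet_iff_forall_oscAt_eq_zero hdense).2 fun z => ?_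
      by_contra hz
      obtain ⟨σ, hσ, ε, hε, hinf⟩ :=
        hsoft φ (isBounded_range_of_mem_ucHComp hφ) ⟨z, pos_iff_ne_zero.2 hz⟩
      exact hinf (isAsymptoticallyInvariant_iff.1
        (isAsymptoticallyInvariant_of_mem_ucHComp hφ) σ hσ ε hε)

/-- A compactification `K` is `M`-equivalent to the `M`-compactification of
its permutation coarse space `(K', 𝓔_{K',K})` if and only if `K` is `M`-soft. -/
theorem statement5 (K : Type u) [TopologicalSpace K] (hK : IsCompactification K)
    (M : Type v) [MetricSpace M] [ProperSpace M] [Nontrivial M] :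
    ucSet K M = ucHComp (permCoarse (homeoPerms K)) M ↔ IsMSoft K M :=
  statement5_general K hK M
end
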